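/- arXiv:0805.0173 — 2 statements merged into one kernel-verified Lean document; each statement's English description precedes it below -/
import Mathlib

section
/- An N_1' configuration is a partial linear space of constant row weight 3 whose rows are partitioned into at most 4 classes with the rows in each class pairwise disjoint. -/
open scoped symmDiff

lemma inter_le_two {n : ℕ} {w w' : Finset (Fin n)} (hw : w.card = 5) (hw' : w'.card = 5)
    (h : 6 ≤ (w ∆ w').card) : (w ∩ w').card ≤ 2 := by
  have h1 : (w ∆ w').card = (w ∪ w').card - (w ∩ w').card := by
    rw [symmDiff_eq_sup_sdiff_inf, Finset.sup_eq_union, Finset.inf_eq_inter]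
    exact Finset.card_sdiff_of_subset Finset.inter_subset_union
  have h2 : (w ∪ w').card + (w ∩ w').card = w.card + w'.card :=
    Finset.card_union_add_card_inter w w'
  have h3 : (w ∩ w').card ≤ (w ∪ w').card := Finset.card_le_card Finset.inter_subset_union
  omega

lemma three_le_inter {n : ℕ} {w w' : Finset (Fin n)} {a b c : Fin n}
    (ha : a ∈ w ∩ w') (hb : b ∈ w ∩ w') (hc : c ∈ w ∩ w')
    (hab : a ≠ b) (hac : a ≠ c) (hbc : b ≠ c) : 3 ≤ (w ∩ w').card := by
  have : ({a, b, c} : Finset (Fin n)) ⊆ w ∩ w' := by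
    intro x hx
    simp only [Finset.mem_insert, Finset.mem_singleton] at hx
    rcases hx with rfl | rfl | rfl <;> assumption
  calc 3 = ({a, b, c} : Finset (Fin n)).card := by
          rw [Finset.card_insert_of_notMem (by simp [hab, hac]),
              Finset.card_insert_of_notMem (by simp [hbc]), Finset.card_singleton]
       _ ≤ _ := Finset.card_le_card this

/-- An N₁' configuration (obtained from an N₁ configuration by deleting the
positions of the anchor `v`) is a partial linear space of constant row weight
3, together with a partition of the rows into at most 4 classes such that the
rows in each class are pairwise disjoint. -/
theorem stmt_4 {n : ℕ} (S : Set (Finset (Fin n))) (v : Finset (Fin n)) (i : Fin n)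
    (hw : ∀ w ∈ S, w.card = 5)
    (hd : ∀ w ∈ S, ∀ w' ∈ S, w ≠ w' → 6 ≤ (w ∆ w').card)
    (hv : v.card = 5) (hi : i ∈ v)
    (hS : ∀ w ∈ S, i ∈ w ∧ (v ∩ w).card = 2) :
    -- constant row weight 3
    (∀ w ∈ S, (w \ v).card = 3) ∧
    -- partial linear space: two columns lie together in at most one row
    (∀ w ∈ S, ∀ w' ∈ S, ∀ x y : Fin n, x ≠ y →
      x ∈ w \ v → y ∈ w \ v → x ∈ w' \ v → y ∈ w' \ v → w = w') ∧
    -- partition into at most 4 classes with pairwise disjoint rows in each class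
    (∃ cl : Finset (Fin n) → Fin 4, ∀ w ∈ S, ∀ w' ∈ S, w ≠ w' →
      cl w = cl w' → Disjoint (w \ v) (w' \ v)) := by
  refine ⟨?_, ?_, ?_⟩
  · intro w hwS
    have h1 := Finset.card_sdiff_add_card_inter w v
    have h2 := (hS w hwS).2
    rw [Finset.inter_comm] at h2
    have h3 := hw w hwS
    omega
  · intro w hwS w' hw'S x y hxy hx hy hx' hy'
    by_contra hne
    have hle := inter_le_two (hw w hwS) (hw w' hw'S) (hd w hwS w' hw'S hne)
    simp only [Finset.mem_sdiff] at hx hy hx' hy'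
    have hxi : x ≠ i := fun h => hx.2 (h ▸ hi)
    have hyi : y ≠ i := fun h => hy.2 (h ▸ hi)
    have := three_le_inter (a := x) (b := y) (c := i)
      (Finset.mem_inter.mpr ⟨hx.1, hx'.1⟩) (Finset.mem_inter.mpr ⟨hy.1, hy'.1⟩)
      (Finset.mem_inter.mpr ⟨(hS w hwS).1, (hS w' hw'S).1⟩) hxy hxi hyi
    omega
  · -- the four elements of v \ {i}
    have h4 : (v.erase i).card = 4 := by rw [Finset.card_erase_of_mem hi, hv]
    set e := (v.erase i).orderIsoOfFin h4 with he
    refine ⟨fun w => if h : ∃ k : Fin 4, (e k : Fin n) ∈ w then h.choose else 0, ?_⟩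
    intro w hwS w' hw'S hne hcl
    -- each w ∈ S contains some e k
    have hex : ∀ w ∈ S, ∃ k : Fin 4, (e k : Fin n) ∈ w := by
      intro w hwS
      have h2 := (hS w hwS).2
      have hivw : i ∈ v ∩ w := Finset.mem_inter.mpr ⟨hi, (hS w hwS).1⟩
      have hc : ((v ∩ w).erase i).card = 1 := by
        rw [Finset.card_erase_of_mem hivw, h2]
      obtain ⟨j, hj⟩ := (Finset.card_pos (s := (v ∩ w).erase i)).mp (by omega)
      have hji : j ≠ i := (Finset.mem_erase.mp hj).1
      have hj' : j ∈ v ∩ w := (Finset.mem_erase.mp hj).2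
      have hjv : j ∈ v.erase i := Finset.mem_erase.mpr ⟨hji, (Finset.mem_inter.mp hj').1⟩
      exact ⟨e.symm ⟨j, hjv⟩, by simp [(Finset.mem_inter.mp hj').2]⟩
    rw [Finset.disjoint_left]
    intro x hx hx'
    simp only [Finset.mem_sdiff] at hx hx'
    have h1 := hex w hwS
    have h2 := hex w' hw'S
    simp only [dif_pos h1, dif_pos h2] at hcl
    set j : Fin n := (e h1.choose : Fin n) with hj
    have hjw : j ∈ w := h1.choose_spec
    have hjw' : j ∈ w' := by rw [hj, hcl]; exact h2.choose_spec
    have hjv : j ∈ v.erase i := (e h1.choose).2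
    have hji : j ≠ i := (Finset.mem_erase.mp hjv).1
    have hjx : j ≠ x := fun h => hx.2 (h ▸ (Finset.mem_erase.mp hjv).2)
    have hxi : x ≠ i := fun h => hx.2 (h ▸ hi)
    have hle := inter_le_two (hw w hwS) (hw w' hw'S) (hd w hwS w' hw'S hne)
    have := three_le_inter (a := j) (b := x) (c := i)
      (Finset.mem_inter.mpr ⟨hjw, hjw'⟩) (Finset.mem_inter.mpr ⟨hx.1, hx'.1⟩)
      (Finset.mem_inter.mpr ⟨(hS w hwS).1, (hS w' hw'S).1⟩) hjx hji hxi
    omega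
end

section
/- In an N_1 configuration of length n (with weight-5 anchor), the number of rows is at most 4⌊(n−5)/3⌋. -/
open scoped symmDiff

lemma card_symmDiff_aux {n : ℕ} (s t : Finset (Fin n)) :
    (s ∆ t).card + 2 * (s ∩ t).card = s.card + t.card := by
  classical
  have h1 : s ∆ t = (s \ t) ∪ (t \ s) := by
    rw [symmDiff_def]; rfl
  have h2 : Disjoint (s \ t) (t \ s) := disjoint_sdiff_sdiff
  have h3 := Finset.card_sdiff_add_card_inter s t
  have h4 := Finset.card_sdiff_add_card_inter t s
  rw [Finset.inter_comm t s] at h4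
  rw [h1, Finset.card_union_of_disjoint h2]
  omega

/-- The number of rows of an N₁ configuration of length `n` is at most
`4⌊(n-5)/3⌋`. -/
theorem stmt_6 {n : ℕ} (S : Finset (Finset (Fin n))) (v : Finset (Fin n)) (i : Fin n)
    (hw : ∀ w ∈ S, w.card = 5)
    (hd : ∀ w ∈ S, ∀ w' ∈ S, w ≠ w' → 6 ≤ (w ∆ w').card)
    (hv : v.card = 5) (hi : i ∈ v)
    (hS : ∀ w ∈ S, i ∈ w ∧ (v ∩ w).card = 2) :
    S.card ≤ 4 * ((n - 5) / 3) := by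
  classical
  -- second v-point of each row
  have hsecond : ∀ w ∈ S, ∃ a ∈ v.erase i, v ∩ w = {i, a} := by
    intro w hwS
    obtain ⟨hiw, hc⟩ := hS w hwS
    obtain ⟨x, y, hxy, hset⟩ := Finset.card_eq_two.mp hc
    have hiin : i ∈ v ∩ w := Finset.mem_inter.mpr ⟨hi, hiw⟩
    rw [hset] at hiin
    rcases Finset.mem_insert.mp hiin with h | h
    · subst h
      refine ⟨y, ?_, hset⟩
      have : y ∈ v ∩ w := by rw [hset]; simp
      exact Finset.mem_erase.mpr ⟨fun h => hxy h.symm, (Finset.mem_inter.mp this).1⟩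
    · have h' : i = y := Finset.mem_singleton.mp h
      subst h'
      refine ⟨x, ?_, by rw [hset, Finset.pair_comm]⟩
      have : x ∈ v ∩ w := by rw [hset]; simp
      exact Finset.mem_erase.mpr ⟨hxy, (Finset.mem_inter.mp this).1⟩
  set f : Finset (Fin n) → Fin n := fun w =>
    if h : ∃ a ∈ v.erase i, v ∩ w = {i, a} then h.choose else i with hf
  have hfspec : ∀ w ∈ S, f w ∈ v.erase i ∧ v ∩ w = {i, f w} := by
    intro w hwS
    have h := hsecond w hwS
    simp only [hf, dif_pos h]
    exact ⟨h.choose_spec.1, h.choose_spec.2⟩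
  have hmap : ∀ w ∈ S, f w ∈ v.erase i := fun w hwS => (hfspec w hwS).1
  rw [Finset.card_eq_sum_card_fiberwise hmap]
  have hcard4 : (v.erase i).card = 4 := by
    rw [Finset.card_erase_of_mem hi, hv]
  have hfiber : ∀ a ∈ v.erase i, (S.filter (fun w => f w = a)).card ≤ (n - 5) / 3 := by
    intro a ha
    set T := S.filter (fun w => f w = a) with hT
    have hTsub : ∀ w ∈ T, w ∈ S ∧ v ∩ w = {i, a} := by
      intro w hwT
      obtain ⟨hwS, hfa⟩ := Finset.mem_filter.mp hwT
      exact ⟨hwS, by rw [(hfspec w hwS).2, hfa]⟩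
    have hia : a ≠ i := (Finset.mem_erase.mp ha).1
    have hav : a ∈ v := (Finset.mem_erase.mp ha).2
    -- each w \ v has card 3
    have hdiff3 : ∀ w ∈ T, (w \ v).card = 3 := by
      intro w hwT
      obtain ⟨hwS, hcap⟩ := hTsub w hwT
      have h3 := Finset.card_sdiff_add_card_inter w v
      rw [Finset.inter_comm] at h3
      have := (hS w hwS).2
      have := hw w hwS
      omega
    -- pairwise disjoint
    have hdisj : ∀ w ∈ T, ∀ w' ∈ T, w ≠ w' → Disjoint (w \ v) (w' \ v) := by
      intro w hwT w' hw'T hne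
      obtain ⟨hwS, hcap⟩ := hTsub w hwT
      obtain ⟨hw'S, hcap'⟩ := hTsub w' hw'T
      have h6 := hd w hwS w' hw'S hne
      have hsd := card_symmDiff_aux w w'
      rw [hw w hwS, hw w' hw'S] at hsd
      have hle2 : (w ∩ w').card ≤ 2 := by omega
      have hsub : ({i, a} : Finset (Fin n)) ⊆ w ∩ w' := by
        intro x hx
        rcases Finset.mem_insert.mp hx with h | h
        · subst h; exact Finset.mem_inter.mpr ⟨(hS w hwS).1, (hS w' hw'S).1⟩
        · rw [Finset.mem_singleton.mp h]
          refine Finset.mem_inter.mpr ⟨?_, ?_⟩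
          · have : a ∈ v ∩ w := by rw [hcap]; simp
            exact (Finset.mem_inter.mp this).2
          · have : a ∈ v ∩ w' := by rw [hcap']; simp
            exact (Finset.mem_inter.mp this).2
      have hpair : ({i, a} : Finset (Fin n)).card = 2 := by
        rw [Finset.card_insert_of_notMem (by simp [Ne.symm hia]), Finset.card_singleton]
      have heq : w ∩ w' = {i, a} :=
        (Finset.eq_of_subset_of_card_le hsub (by omega)).symm
      rw [Finset.disjoint_left]
      intro x hx hx'
      have hxw : x ∈ w ∩ w' := Finset.mem_inter.mpr
        ⟨(Finset.mem_sdiff.mp hx).1, (Finset.mem_sdiff.mp hx').1⟩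
      rw [heq] at hxw
      have hxnv := (Finset.mem_sdiff.mp hx).2
      rcases Finset.mem_insert.mp hxw with h | h
      · exact hxnv (h ▸ hi)
      · exact hxnv ((Finset.mem_singleton.mp h) ▸ hav)
    have hbi : (T.biUnion (fun w => w \ v)).card = 3 * T.card := by
      rw [Finset.card_biUnion hdisj]
      rw [Finset.sum_congr rfl hdiff3]
      simp [mul_comm]
    have hsubc : T.biUnion (fun w => w \ v) ⊆ vᶜ := by
      intro x hx
      obtain ⟨w, _, hxw⟩ := Finset.mem_biUnion.mp hx
      exact Finset.mem_compl.mpr (Finset.mem_sdiff.mp hxw).2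
    have hcompl : (vᶜ : Finset (Fin n)).card = n - 5 := by
      rw [Finset.card_compl, hv, Fintype.card_fin]
    have h3le : 3 * T.card ≤ n - 5 := by
      rw [← hbi, ← hcompl]; exact Finset.card_le_card hsubc
    rw [Nat.le_div_iff_mul_le (by norm_num)]
    omega
  calc ∑ a ∈ v.erase i, (S.filter (fun w => f w = a)).card
      ≤ ∑ _a ∈ v.erase i, (n - 5) / 3 := Finset.sum_le_sum hfiber
    _ = 4 * ((n - 5) / 3) := by rw [Finset.sum_const, hcard4]; simp [mul_comm]
end
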